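/- arXiv:2212.02682 — 3 statements merged into one kernel-verified Lean document; each statement's English description precedes it below -/
import Mathlib

section
/- Let Δx, Δy > 0. For each (j,k) ∈ ℤ² let Ā_{j,k}, B̄_{j,k} ∈ ℝ be cell averages satisfying Ā_{j,k} + B̄_{j,k} = 0, and let slopes (A_x)_{j,k}, (B_x)_{j,k}, (A_y)_{j,k}, (B_y)_{j,k} ∈ ℝ satisfy (A_x)_{j,k} + (B_x)_{j,k} = 0 and (A_y)_{j,k} + (B_y)_{j,k} = 0. Define the reconstructed interface values A^E_{j,k} = Ā_{j,k} + (Δx/2)(A_x)_{j,k}, A^W_{j,k} = Ā_{j,k} − (Δx/2)(A_x)_{j,k}, A^N_{j,k} = Ā_{j,k} + (Δy/2)(A_y)_{j,k}, A^S_{j,k} = Ā_{j,k} − (Δy/2)(A_y)_{j,k}, and analogously for B. Let u^E_{j,k}, u^W_{j,k}, v^N_{j,k}, v^S_{j,k}, φ^E_{j,k}, φ^W_{j,k}, ψ^N_{j,k}, ψ^S_{j,k} be arbitrary real numbers, and let one-sided speeds s^±_{j+1/2,k} and s^±_{j,k+1/2} satisfy s^+ − s^− > 0 at every interface. Define the central-upwind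 fluxes at the vertical interface (j+1/2,k): 𝓕^{(9)}_{j+1/2,k} = [s^+ (u^E_{j,k}A^E_{j,k} − φ^E_{j,k}) − s^− (u^W_{j+1,k}A^W_{j+1,k} − φ^W_{j+1,k})]/(s^+ − s^−) + s^+s^−(A^W_{j+1,k} − A^E_{j,k})/(s^+ − s^−) and 𝓕^{(10)}_{j+1/2,k} = [s^+ (u^E_{j,k}B^E_{j,k} + φ^E_{j,k}) − s^− (u^W_{j+1,k}B^W_{j+1,k} + φ^W_{j+1,k})]/(s^+ − s^−) + s^+s^−(B^W_{j+1,k} − B^E_{j,k})/(s^+ − s^−), where s^± = s^±_{j+1/2,k}; define 𝓖^{(9)}_{j,k+1/2}, 𝓖^{(10)}_{j,k+1/2} analogously at horizontal interfaces with fluxes v A + ψ and v B − ψ and speeds s^±_{j,k+1/2}. Then for every (j,k), the combined semi-discrete right-hand side −(1/Δx)[𝓕^{(9)}_{j+1/2,k} + 𝓕^{(10)}_{j+1/2,k} − 𝓕^{(9)}_{j−1/2,k} − 𝓕^{(10)}_{j−1/2,k}] − (1/Δy)[𝓖^{(9)}_{j,k+1/2} + 𝓖^{(10)}_{j,k+1/2}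 − 𝓖^{(9)}_{j,k−1/2} − 𝓖^{(10)}_{j,k−1/2}] equals zero. -/
/-- Theorem 2.1 of the paper in semi-discrete form: for the ninth and tenth components of
the augmented ideal MHD system (evolving `A = (b₁)_x` and `B = (b₂)_y`), if the cell
averages satisfy `Ā + B̄ = 0` and the slopes satisfy `(A_x) + (B_x) = 0` and
`(A_y) + (B_y) = 0` in every cell, then the combined central-upwind semi-discrete
right-hand side of the two components vanishes in every cell.

Indexing convention: `F9 j k` denotes the flux `𝓕^{(9)}_{j+1/2,k}` at the vertical
interface between cells `(j,k)` and `(j+1,k)`, and `G9 j k` denotes `𝓖^{(9)}_{j,k+1/2}`;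
similarly for the one-sided speeds `sxp j k = s⁺_{j+1/2,k}`, `syp j k = s⁺_{j,k+1/2}`, etc. -/
theorem pccu_semi_discrete_divergence_free
    (Δx Δy : ℝ) (hΔx : 0 < Δx) (hΔy : 0 < Δy)
    (Abar Bbar Ax Bx Ay By : ℤ → ℤ → ℝ)
    (hAB : ∀ j k, Abar j k + Bbar j k = 0)
    (hslx : ∀ j k, Ax j k + Bx j k = 0)
    (hsly : ∀ j k, Ay j k + By j k = 0)
    -- reconstructed interface values
    (AE AW AN AS BE BW BN BS : ℤ → ℤ → ℝ)
    (hAE : ∀ j k, AE j k = Abar j k + Δx / 2 * Ax j k)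
    (hAW : ∀ j k, AW j k = Abar j k - Δx / 2 * Ax j k)
    (hAN : ∀ j k, AN j k = Abar j k + Δy / 2 * Ay j k)
    (hAS : ∀ j k, AS j k = Abar j k - Δy / 2 * Ay j k)
    (hBE : ∀ j k, BE j k = Bbar j k + Δx / 2 * Bx j k)
    (hBW : ∀ j k, BW j k = Bbar j k - Δx / 2 * Bx j k)
    (hBN : ∀ j k, BN j k = Bbar j k + Δy / 2 * By j k)
    (hBS : ∀ j k, BS j k = Bbar j k - Δy / 2 * By j k)
    -- arbitrary interface data for velocities and for φ = b₂u_y, ψ = b₁v_x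
    (uE uW vN vS φE φW ψN ψS : ℤ → ℤ → ℝ)
    -- one-sided local speeds of propagation
    (sxp sxm syp sym : ℤ → ℤ → ℝ)
    (hsx : ∀ j k, 0 < sxp j k - sxm j k)
    (hsy : ∀ j k, 0 < syp j k - sym j k)
    -- central-upwind fluxes
    (F9 F10 G9 G10 : ℤ → ℤ → ℝ)
    (hF9 : ∀ j k, F9 j k =
      (sxp j k * (uE j k * AE j k - φE j k)
        - sxm j k * (uW (j + 1) k * AW (j + 1) k - φW (j + 1) k)) / (sxp j k - sxm j k)
      + sxp j k * sxm j k * (AW (j + 1) k - AE j k) / (sxp j k - sxm j k))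
    (hF10 : ∀ j k, F10 j k =
      (sxp j k * (uE j k * BE j k + φE j k)
        - sxm j k * (uW (j + 1) k * BW (j + 1) k + φW (j + 1) k)) / (sxp j k - sxm j k)
      + sxp j k * sxm j k * (BW (j + 1) k - BE j k) / (sxp j k - sxm j k))
    (hG9 : ∀ j k, G9 j k =
      (syp j k * (vN j k * AN j k + ψN j k)
        - sym j k * (vS j (k + 1) * AS j (k + 1) + ψS j (k + 1))) / (syp j k - sym j k)
      + syp j k * sym j k * (AS j (k + 1) - AN j k) / (syp j k - sym j k))
    (hG10 : ∀ j k, G10 j k =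
      (syp j k * (vN j k * BN j k - ψN j k)
        - sym j k * (vS j (k + 1) * BS j (k + 1) - ψS j (k + 1))) / (syp j k - sym j k)
      + syp j k * sym j k * (BS j (k + 1) - BN j k) / (syp j k - sym j k)) :
    ∀ j k : ℤ,
      -(1 / Δx) * (F9 j k + F10 j k - F9 (j - 1) k - F10 (j - 1) k)
        - (1 / Δy) * (G9 j k + G10 j k - G9 j (k - 1) - G10 j (k - 1)) = 0 := by
  have hBE' : ∀ j k, BE j k = -AE j k := by
    intro j k
    have h1 := hAB j k; have h2 := hslx j k
    rw [hBE, hAE]; nlinarith [h1, h2]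
  have hBW' : ∀ j k, BW j k = -AW j k := by
    intro j k
    have h1 := hAB j k; have h2 := hslx j k
    rw [hBW, hAW]; nlinarith [h1, h2]
  have hBN' : ∀ j k, BN j k = -AN j k := by
    intro j k
    have h1 := hAB j k; have h2 := hsly j k
    rw [hBN, hAN]; nlinarith [h1, h2]
  have hBS' : ∀ j k, BS j k = -AS j k := by
    intro j k
    have h1 := hAB j k; have h2 := hsly j k
    rw [hBS, hAS]; nlinarith [h1, h2]
  have hF : ∀ j k, F9 j k + F10 j k = 0 := by
    intro j k
    rw [hF9, hF10, hBE', hBW']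
    ring
  have hG : ∀ j k, G9 j k + G10 j k = 0 := by
    intro j k
    rw [hG9, hG10, hBN', hBS']
    ring
  intro j k
  have h1 := hF j k; have h2 := hF (j-1) k
  have h3 := hG j k; have h4 := hG j (k-1)
  linear_combination (-(1/Δx)) * (h1 - h2) - (1/Δy) * (h3 - h4)
end

section
/- Under the same data as in the semi-discrete statement (cell averages Ā_{j,k}, B̄_{j,k} with Ā_{j,k} + B̄_{j,k} = 0, slopes satisfying (A_x)_{j,k} + (B_x)_{j,k} = 0 and (A_y)_{j,k} + (B_y)_{j,k} = 0, interface values reconstructed linearly, arbitrary velocity and φ, ψ interface data, and one-sided speeds with s^+ − s^− > 0 at every interface), let Δt > 0 and define the forward Euler update Ā^{new}_{j,k} = Ā_{j,k} + Δt·RHS^{(9)}_{j,k} and B̄^{new}_{j,k} = B̄_{j,k} + Δt·RHS^{(10)}_{j,k}, where RHS^{(9)}_{j,k} = −(1/Δx)[𝓕^{(9)}_{j+1/2,k} − 𝓕^{(9)}_{j−1/2,k}] − (1/Δy)[𝓖^{(9)}_{j,k+1/2} − 𝓖^{(9)}_{j,k−1/2}] and analogously RHS^{(10)}. Then Ā^{new}_{j,k}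 + B̄^{new}_{j,k} = 0 for all (j,k); consequently, for any scaling factors σ_{j,k} ∈ ℝ, the magnetic-field slopes ((b₁)_x)_{j,k} = σ_{j,k}Ā^{new}_{j,k} and ((b₂)_y)_{j,k} = σ_{j,k}B̄^{new}_{j,k} satisfy the local discrete divergence-free condition ((b₁)_x)_{j,k} + ((b₂)_y)_{j,k} = 0. -/
/-- Fully discrete form of Theorem 2.1: one forward Euler step of the path-conservative
central-upwind scheme preserves the discrete constraint `Ā_{j,k} + B̄_{j,k} = 0`;
consequently, the magnetic-field slopes `σ_{j,k}Ā^{new}_{j,k}` and `σ_{j,k}B̄^{new}_{j,k}`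
satisfy the local discrete divergence-free condition for any scaling factors `σ_{j,k}`.

Indexing convention: `F9 j k` denotes the flux `𝓕^{(9)}_{j+1/2,k}` at the vertical
interface between cells `(j,k)` and `(j+1,k)`, and `G9 j k` denotes `𝓖^{(9)}_{j,k+1/2}`;
similarly for the one-sided speeds `sxp j k = s⁺_{j+1/2,k}`, `syp j k = s⁺_{j,k+1/2}`, etc. -/
theorem pccu_forward_euler_divergence_free
    (Δx Δy : ℝ) (hΔx : 0 < Δx) (hΔy : 0 < Δy)
    (Abar Bbar Ax Bx Ay By : ℤ → ℤ → ℝ)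
    (hAB : ∀ j k, Abar j k + Bbar j k = 0)
    (hslx : ∀ j k, Ax j k + Bx j k = 0)
    (hsly : ∀ j k, Ay j k + By j k = 0)
    -- reconstructed interface values
    (AE AW AN AS BE BW BN BS : ℤ → ℤ → ℝ)
    (hAE : ∀ j k, AE j k = Abar j k + Δx / 2 * Ax j k)
    (hAW : ∀ j k, AW j k = Abar j k - Δx / 2 * Ax j k)
    (hAN : ∀ j k, AN j k = Abar j k + Δy / 2 * Ay j k)
    (hAS : ∀ j k, AS j k = Abar j k - Δy / 2 * Ay j k)
    (hBE : ∀ j k, BE j k = Bbar j k + Δx / 2 * Bx j k)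
    (hBW : ∀ j k, BW j k = Bbar j k - Δx / 2 * Bx j k)
    (hBN : ∀ j k, BN j k = Bbar j k + Δy / 2 * By j k)
    (hBS : ∀ j k, BS j k = Bbar j k - Δy / 2 * By j k)
    -- arbitrary interface data for velocities and for φ = b₂u_y, ψ = b₁v_x
    (uE uW vN vS φE φW ψN ψS : ℤ → ℤ → ℝ)
    -- one-sided local speeds of propagation
    (sxp sxm syp sym : ℤ → ℤ → ℝ)
    (hsx : ∀ j k, 0 < sxp j k - sxm j k)
    (hsy : ∀ j k, 0 < syp j k - sym j k)
    -- central-upwind fluxes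
    (F9 F10 G9 G10 : ℤ → ℤ → ℝ)
    (hF9 : ∀ j k, F9 j k =
      (sxp j k * (uE j k * AE j k - φE j k)
        - sxm j k * (uW (j + 1) k * AW (j + 1) k - φW (j + 1) k)) / (sxp j k - sxm j k)
      + sxp j k * sxm j k * (AW (j + 1) k - AE j k) / (sxp j k - sxm j k))
    (hF10 : ∀ j k, F10 j k =
      (sxp j k * (uE j k * BE j k + φE j k)
        - sxm j k * (uW (j + 1) k * BW (j + 1) k + φW (j + 1) k)) / (sxp j k - sxm j k)
      + sxp j k * sxm j k * (BW (j + 1) k - BE j k) / (sxp j k - sxm j k))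
    (hG9 : ∀ j k, G9 j k =
      (syp j k * (vN j k * AN j k + ψN j k)
        - sym j k * (vS j (k + 1) * AS j (k + 1) + ψS j (k + 1))) / (syp j k - sym j k)
      + syp j k * sym j k * (AS j (k + 1) - AN j k) / (syp j k - sym j k))
    (hG10 : ∀ j k, G10 j k =
      (syp j k * (vN j k * BN j k - ψN j k)
        - sym j k * (vS j (k + 1) * BS j (k + 1) - ψS j (k + 1))) / (syp j k - sym j k)
      + syp j k * sym j k * (BS j (k + 1) - BN j k) / (syp j k - sym j k))
    -- forward Euler update
    (Δt : ℝ) (hΔt : 0 < Δt)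
    (Anew Bnew : ℤ → ℤ → ℝ)
    (hAnew : ∀ j k, Anew j k = Abar j k
      + Δt * (-(1 / Δx) * (F9 j k - F9 (j - 1) k) - (1 / Δy) * (G9 j k - G9 j (k - 1))))
    (hBnew : ∀ j k, Bnew j k = Bbar j k
      + Δt * (-(1 / Δx) * (F10 j k - F10 (j - 1) k) - (1 / Δy) * (G10 j k - G10 j (k - 1)))) :
    (∀ j k : ℤ, Anew j k + Bnew j k = 0)
    ∧ ∀ (σ : ℤ → ℤ → ℝ) (j k : ℤ),
        σ j k * Anew j k + σ j k * Bnew j k = 0 := by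
  have hEsum : ∀ j k, BE j k = -AE j k := by
    intro j k
    rw [hAE, hBE]
    have h1 := hAB j k; have h2 := hslx j k
    nlinarith
  have hWsum : ∀ j k, BW j k = -AW j k := by
    intro j k
    rw [hAW, hBW]
    have h1 := hAB j k; have h2 := hslx j k
    nlinarith
  have hNsum : ∀ j k, BN j k = -AN j k := by
    intro j k
    rw [hAN, hBN]
    have h1 := hAB j k; have h2 := hsly j k
    nlinarith
  have hSsum : ∀ j k, BS j k = -AS j k := by
    intro j k
    rw [hAS, hBS]
    have h1 := hAB j k; have h2 := hsly j k
    nlinarith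
  have hF : ∀ j k, F9 j k + F10 j k = 0 := by
    intro j k
    rw [hF9, hF10, hEsum, hWsum]
    have hd : sxp j k - sxm j k ≠ 0 := ne_of_gt (hsx j k)
    field_simp
    ring
  have hG : ∀ j k, G9 j k + G10 j k = 0 := by
    intro j k
    rw [hG9, hG10, hNsum, hSsum]
    have hd : syp j k - sym j k ≠ 0 := ne_of_gt (hsy j k)
    field_simp
    ring
  have main : ∀ j k : ℤ, Anew j k + Bnew j k = 0 := by
    intro j k
    rw [hAnew, hBnew]
    have h1 := hAB j k
    have e2 : F10 j k = -F9 j k := by linarith [hF j k]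
    have e3 : F10 (j - 1) k = -F9 (j - 1) k := by linarith [hF (j - 1) k]
    have e4 : G10 j k = -G9 j k := by linarith [hG j k]
    have e5 : G10 j (k - 1) = -G9 j (k - 1) := by linarith [hG j (k - 1)]
    rw [e2, e3, e4, e5]
    linear_combination h1
  exact ⟨main, fun σ j k => by rw [← mul_add, main j k, mul_zero]⟩
end

section
/- Let u, v, m, n : ℝ² × ℝ → ℝ be twice continuously differentiable. (i) If ∂_t m + ∂_y(v m − u n) = −u(∂_x m + ∂_y n) at every point, then A := ∂_x m satisfies ∂_t A + ∂_x(u A − n ∂_y u) + ∂_y(v A + m ∂_x v) = 0 at every point. (ii) If ∂_t n + ∂_x(u n − v m) = −v(∂_x m + ∂_y n) at every point, then B := ∂_y n satisfies ∂_t B + ∂_x(u B + n ∂_y u) + ∂_y(v B − m ∂_x v) = 0 at every point. -/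
/-!
Write `∂_e` for the derivative in direction `e`. With the product rule, the hypothesis of (i) says
that `∂_t m + ∂_y (v m) + (u ∂_x m - n ∂_y u)` vanishes identically, hence so does its `x`-derivative.
The `y`-flux `v ∂_x m + m ∂_x v` of the conclusion is `∂_x (v m)`, so the conclusion is that same
`x`-derivative once the mixed partials `∂_t ∂_x m` and `∂_y ∂_x (v m)` are commuted.
Part (ii) is part (i) with the roles of `x` and `y`, `u` and `v`, `m` and `n` exchanged.
-/

/-- Partial derivative in `x` of a function of `(x, y, t) : ℝ × ℝ × ℝ`. -/
noncomputable def pdx (f : ℝ × ℝ × ℝ → ℝ) (p : ℝ × ℝ × ℝ) : ℝ := fderiv ℝ f p (1, 0, 0)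

/-- Partial derivative in `y` of a function of `(x, y, t) : ℝ × ℝ × ℝ`. -/
noncomputable def pdy (f : ℝ × ℝ × ℝ → ℝ) (p : ℝ × ℝ × ℝ) : ℝ := fderiv ℝ f p (0, 1, 0)

/-- Partial derivative in `t` of a function of `(x, y, t) : ℝ × ℝ × ℝ`. -/
noncomputable def pdt (f : ℝ × ℝ × ℝ → ℝ) (p : ℝ × ℝ × ℝ) : ℝ := fderiv ℝ f p (0, 0, 1)

section DirectionalDerivative

variable {E : Type*} [NormedAddCommGroup E] [NormedSpace ℝ E] {f g : E → ℝ}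

theorem fderiv_fun_mul_apply {p : E} (hf : DifferentiableAt ℝ f p) (hg : DifferentiableAt ℝ g p)
    (e : E) : fderiv ℝ (fun q => f q * g q) p e = f p * fderiv ℝ g p e + g p * fderiv ℝ f p e := by
  simp [fderiv_fun_mul hf hg]

theorem ContDiff.fderiv_fderiv_apply_comm (hf : ContDiff ℝ 2 f) (p e e' : E) :
    fderiv ℝ (fun q => fderiv ℝ f q e) p e' = fderiv ℝ (fun q => fderiv ℝ f q e') p e := by
  have hf' : DifferentiableAt ℝ (fderiv ℝ f) p :=
    (hf.fderiv_right le_rfl).differentiable one_ne_zero p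
  simp only [fderiv_clm_apply hf' (differentiableAt_const _), fderiv_const_apply]
  simpa using hf.contDiffAt.isSymmSndFDerivAt (by simp) e' e

theorem evolution_fderiv_of_modified_induction {u v m n : E → ℝ}
    (hu : ContDiff ℝ 2 u) (hv : ContDiff ℝ 2 v) (hm : ContDiff ℝ 2 m) (hn : ContDiff ℝ 2 n)
    (ex ey et : E)
    (h : ∀ p, fderiv ℝ m p et + fderiv ℝ (fun q => v q * m q - u q * n q) p ey
        = -(u p) * (fderiv ℝ m p ex + fderiv ℝ n p ey)) (p : E) :
    fderiv ℝ (fun q => fderiv ℝ m q ex) p et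
      + fderiv ℝ (fun q => u q * fderiv ℝ m q ex - n q * fderiv ℝ u q ey) p ex
      + fderiv ℝ (fun q => v q * fderiv ℝ m q ex + m q * fderiv ℝ v q ex) p ey = 0 := by
  have du := hu.differentiable two_ne_zero
  have dv := hv.differentiable two_ne_zero
  have dm := hm.differentiable two_ne_zero
  have dn := hn.differentiable two_ne_zero
  have hvm : ContDiff ℝ 2 (fun q => v q * m q) := hv.mul hm
  set flux := fun q => u q * fderiv ℝ m q ex - n q * fderiv ℝ u q ey
  have conservation :
      (fun q => fderiv ℝ m q et + fderiv ℝ (fun q => v q * m q) q ey + flux q) = 0 := by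
    funext q
    have hq := h q
    rw [fderiv_fun_sub (by fun_prop) (by fun_prop), sub_apply,
      fderiv_fun_mul_apply (du q) (dn q)] at hq
    simp only [flux, Pi.zero_apply]
    linear_combination hq
  have conservation_x := congrArg (fun F => fderiv ℝ F p ex) conservation
  simp only [fderiv_zero, Pi.zero_apply, zero_apply] at conservation_x
  rw [fderiv_fun_add (by fun_prop) (by fun_prop), fderiv_fun_add (by fun_prop) (by fun_prop),
    add_apply, add_apply] at conservation_x
  have flux_y : (fun q => v q * fderiv ℝ m q ex + m q * fderiv ℝ v q ex)
      = fun q => fderiv ℝ (fun q => v q * m q) q ex := by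
    funext q
    rw [fderiv_fun_mul_apply (dv q) (dm q)]
  rw [flux_y, hm.fderiv_fderiv_apply_comm, hvm.fderiv_fderiv_apply_comm]
  linear_combination conservation_x

end DirectionalDerivative

/-- Evolution equations (2.8)/(3.3) for the auxiliary variables `A = ∂_x m` and `B = ∂_y n`,
obtained by differentiating the Godunov–Powell modified induction equations in `x` and `y`. -/
theorem auxiliary_variable_evolution
    (u v m n : ℝ × ℝ × ℝ → ℝ)
    (hu : ContDiff ℝ 2 u) (hv : ContDiff ℝ 2 v)
    (hm : ContDiff ℝ 2 m) (hn : ContDiff ℝ 2 n) :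
    ((∀ p : ℝ × ℝ × ℝ, pdt m p + pdy (fun q => v q * m q - u q * n q) p
        = -(u p) * (pdx m p + pdy n p)) →
      ∀ p : ℝ × ℝ × ℝ,
        pdt (fun q => pdx m q) p
          + pdx (fun q => u q * pdx m q - n q * pdy u q) p
          + pdy (fun q => v q * pdx m q + m q * pdx v q) p = 0)
    ∧ ((∀ p : ℝ × ℝ × ℝ, pdt n p + pdx (fun q => u q * n q - v q * m q) p
        = -(v p) * (pdx m p + pdy n p)) →
      ∀ p : ℝ × ℝ × ℝ,
        pdt (fun q => pdy n q) p
          + pdx (fun q => u q * pdy n q + n q * pdy u q) p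
          + pdy (fun q => v q * pdy n q - m q * pdx v q) p = 0) := by
  constructor
  · exact evolution_fderiv_of_modified_induction hu hv hm hn _ _ _
  · intro h p
    have swapped := evolution_fderiv_of_modified_induction hv hu hn hm (0, 1, 0) (1, 0, 0)
      (0, 0, 1) (fun p => (h p).trans (by simp only [pdx, pdy]; ring)) p
    unfold pdx pdy pdt
    linear_combination swapped
end
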